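/- Adequacy of the logical normalization predicate: if the Kripke logical predicate holds of a term-in-context, Ψ ⊩ P ∈ ⟦A⟧, then P halts under ⌊Ψ⌋, i.e. P reduces in finitely many steps to a normal form under ⌊Ψ⌋. -/

import Mathlib

namespace PQA

/-- Modes of Proto-Quipper-A: unrestricted, linear functional, linear circuit. -/
inductive Mode | U | L | Q
deriving DecidableEq, Repr

/-- The mode preorder generated by U > L, L > Q, Q > L. -/
def Mode.ge : Mode → Mode → Prop
  | .U, _ => True
  | .L, .U => False
  | .L, _ => True
  | .Q, .U => False
  | .Q, _ => True

/-- Types, stratified by mode. -/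
inductive Ty
  | unitT (m : Mode)
  | qubit
  | tensor (m : Mode) (A B : Ty)
  | arrow (m : Mode) (A B : Ty)
  | up (lo hi : Mode) (A : Ty)
  | down (A : Ty)
deriving DecidableEq, Repr

/-- The mode at which a type lives. -/
def Ty.mode : Ty → Mode
  | .unitT m => m
  | .qubit => .Q
  | .tensor m _ _ => m
  | .arrow m _ _ => m
  | .up _ hi _ => hi
  | .down _ => .L

/-- Simple (wire) types at the circuit mode Q. -/
inductive Ty.Simple : Ty → Prop
  | unit : Ty.Simple (.unitT .Q)
  | qubit : Ty.Simple .qubit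
  | tensor {A B : Ty} : Ty.Simple A → Ty.Simple B → Ty.Simple (.tensor .Q A B)

mutual
/-- Terms (functional and circuit, distinguished by mode annotations). -/
inductive Tm
  | var (x : String)
  | lam (m : Mode) (x : String) (M : Tm)
  | triv (m : Mode)
  | pair (m : Mode) (M N : Tm)
  | app (m : Mode) (M N : Tm)
  | susp (M : Tm)
  | force (M : Tm)
  | down (M : Tm)
  | gate (g : String) (S U : Ty)
  | matchWith (M : Tm) (p : Pat)
/-- Match patterns together with their bodies. -/
inductive Pat
  | punit (N : Tm)
  | ppair (x y : String) (N : Tm)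
  | pdown (x : String) (N : Tm)
end

mutual
/-- Capture-naive simultaneous substitution. -/
def Tm.subst (σ : String → Tm) : Tm → Tm
  | .var x => σ x
  | .lam m x M => .lam m x (M.subst (fun y => if y = x then .var y else σ y))
  | .triv m => .triv m
  | .pair m M N => .pair m (M.subst σ) (N.subst σ)
  | .app m M N => .app m (M.subst σ) (N.subst σ)
  | .susp M => .susp (M.subst σ)
  | .force M => .force (M.subst σ)
  | .down M => .down (M.subst σ)
  | .gate g S U => .gate g S U
  | .matchWith M p => .matchWith (M.subst σ) (p.subst σ)

def Pat.subst (σ : String → Tm) : Pat → Pat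
  | .punit N => .punit (N.subst σ)
  | .ppair x y N =>
      .ppair x y (N.subst (fun z => if z = x ∨ z = y then .var z else σ z))
  | .pdown x N => .pdown x (N.subst (fun z => if z = x then .var z else σ z))
end

/-- Substitution of a single term for a variable. -/
def subst1 (x : String) (V M : Tm) : Tm :=
  M.subst (fun y => if y = x then V else .var y)

/-- Variables bound by a pattern. -/
def Pat.vars : Pat → List String
  | .punit _ => []
  | .ppair x y _ => [x, y]
  | .pdown x _ => [x]

/-- The body of a pattern. -/
def Pat.body : Pat → Tm
  | .punit N => N
  | .ppair _ _ N => N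
  | .pdown _ N => N

/-- Apply a function to the body of a pattern (for commuting conversions). -/
def Pat.mapBody (f : Tm → Tm) : Pat → Pat
  | .punit N => .punit (f N)
  | .ppair x y N => .ppair x y (f N)
  | .pdown x N => .pdown x (f N)

/-- Replace the body of a pattern. -/
def Pat.withBody (p : Pat) (B : Tm) : Pat := p.mapBody (fun _ => B)

/-- The context of typed variables bound by a pattern eliminating type `A`. -/
def patCtx : Pat → Ty → List (String × Ty)
  | .punit _, _ => []
  | .ppair x y _, .tensor _ A B => [(x, A), (y, B)]
  | .ppair x y _, _ => [(x, .qubit), (y, .qubit)]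
  | .pdown x _, .down A => [(x, A)]
  | .pdown x _, _ => []

/-- Typing contexts. -/
abbrev Ctx := List (String × Ty)

/-- Every assumption in the context is at a mode ≥ m. -/
def CtxGe (Δ : Ctx) (m : Mode) : Prop := ∀ q ∈ Δ, Mode.ge q.2.mode m

/-- The context is entirely unrestricted. -/
def CtxU (Δ : Ctx) : Prop := CtxGe Δ .U

/-- Context splitting: linear assumptions go to one side, unrestricted
assumptions may be shared. -/
inductive Split : Ctx → Ctx → Ctx → Prop
  | nil : Split [] [] []
  | left {Δ Δ₁ Δ₂ : Ctx} {q : String × Ty} :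
      Split Δ Δ₁ Δ₂ → Split (q :: Δ) (q :: Δ₁) Δ₂
  | right {Δ Δ₁ Δ₂ : Ctx} {q : String × Ty} :
      Split Δ Δ₁ Δ₂ → Split (q :: Δ) Δ₁ (q :: Δ₂)
  | both {Δ Δ₁ Δ₂ : Ctx} {q : String × Ty} :
      q.2.mode = .U → Split Δ Δ₁ Δ₂ → Split (q :: Δ) (q :: Δ₁) (q :: Δ₂)

mutual
/-- The substructural Proto-Quipper-A typing judgment `Δ ⊢ P : A`. -/
inductive HasTy : Ctx → Tm → Ty → Prop
  | var {Δ₁ Δ₂ : Ctx} {x : String} {A : Ty} :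
      CtxU Δ₁ → CtxU Δ₂ → (A.mode = .Q → A.Simple) →
      HasTy (Δ₁ ++ (x, A) :: Δ₂) (.var x) A
  | lam {Δ : Ctx} {m : Mode} {x : String} {M : Tm} {A B : Ty} :
      A.mode = m → B.mode = m → (m = .Q → A.Simple ∧ B.Simple) →
      HasTy ((x, A) :: Δ) M B →
      HasTy Δ (.lam m x M) (.arrow m A B)
  | triv {Δ : Ctx} {m : Mode} : CtxU Δ → HasTy Δ (.triv m) (.unitT m)
  | pair {Δ Δ₁ Δ₂ : Ctx} {m : Mode} {M N : Tm} {A B : Ty} :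
      Split Δ Δ₁ Δ₂ → A.mode = m → B.mode = m →
      HasTy Δ₁ M A → HasTy Δ₂ N B →
      HasTy Δ (.pair m M N) (.tensor m A B)
  | app {Δ Δ₁ Δ₂ : Ctx} {m : Mode} {M N : Tm} {A B : Ty} :
      Split Δ Δ₁ Δ₂ →
      HasTy Δ₁ M (.arrow m A B) → HasTy Δ₂ N A →
      HasTy Δ (.app m M N) B
  | susp {Δ : Ctx} {lo hi : Mode} {M : Tm} {A : Ty} :
      ((lo = .L ∧ hi = .U) ∨ (lo = .Q ∧ hi = .L)) →
      A.mode = lo → CtxGe Δ hi →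
      HasTy Δ M A →
      HasTy Δ (.susp M) (.up lo hi A)
  | force {Δ : Ctx} {lo hi : Mode} {M : Tm} {A : Ty} :
      HasTy Δ M (.up lo hi A) → HasTy Δ (.force M) A
  | down {Δ : Ctx} {M : Tm} {A : Ty} :
      A.mode = .U → HasTy Δ M A → HasTy Δ (.down M) (.down A)
  | gate {Δ : Ctx} {g : String} {S U : Ty} :
      CtxU Δ → S.Simple → U.Simple →
      HasTy Δ (.gate g S U) (.arrow .Q S U)
  | mtch {Δ Δ₁ Δ₂ : Ctx} {M : Tm} {p : Pat} {A B : Ty} :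
      Split Δ Δ₁ Δ₂ →
      HasTy Δ₁ M A → PatTy Δ₂ p A B →
      HasTy Δ (.matchWith M p) B

/-- Pattern typing `Δ ⊢ p : A ⇒ B` for the substructural system. -/
inductive PatTy : Ctx → Pat → Ty → Ty → Prop
  | punit {Δ : Ctx} {m : Mode} {N : Tm} {B : Ty} :
      Mode.ge m B.mode → HasTy Δ N B →
      PatTy Δ (.punit N) (.unitT m) B
  | ppair {Δ : Ctx} {m : Mode} {x y : String} {N : Tm} {A₁ A₂ B : Ty} :
      Mode.ge m B.mode →
      HasTy ((x, A₁) :: (y, A₂) :: Δ) N B →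
      PatTy Δ (.ppair x y N) (.tensor m A₁ A₂) B
  | pdown {Δ : Ctx} {x : String} {N : Tm} {A B : Ty} :
      Mode.ge .L B.mode →
      HasTy ((x, A) :: Δ) N B →
      PatTy Δ (.pdown x N) (.down A) B
end

mutual
/-- The structural approximation PQ-X: same rule skeletons, shared
contexts, no splitting, no mode restrictions, implicit weakening. -/
inductive XTy : Ctx → Tm → Ty → Prop
  | var {Δ : Ctx} {x : String} {A : Ty} :
      (x, A) ∈ Δ → XTy Δ (.var x) A
  | lam {Δ : Ctx} {m : Mode} {x : String} {M : Tm} {A B : Ty} :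
      XTy ((x, A) :: Δ) M B →
      XTy Δ (.lam m x M) (.arrow m A B)
  | triv {Δ : Ctx} {m : Mode} : XTy Δ (.triv m) (.unitT m)
  | pair {Δ : Ctx} {m : Mode} {M N : Tm} {A B : Ty} :
      XTy Δ M A → XTy Δ N B → XTy Δ (.pair m M N) (.tensor m A B)
  | app {Δ : Ctx} {m : Mode} {M N : Tm} {A B : Ty} :
      XTy Δ M (.arrow m A B) → XTy Δ N A → XTy Δ (.app m M N) B
  | susp {Δ : Ctx} {lo hi : Mode} {M : Tm} {A : Ty} :
      XTy Δ M A → XTy Δ (.susp M) (.up lo hi A)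
  | force {Δ : Ctx} {lo hi : Mode} {M : Tm} {A : Ty} :
      XTy Δ M (.up lo hi A) → XTy Δ (.force M) A
  | down {Δ : Ctx} {M : Tm} {A : Ty} :
      XTy Δ M A → XTy Δ (.down M) (.down A)
  | gate {Δ : Ctx} {g : String} {S U : Ty} :
      S.Simple → U.Simple → XTy Δ (.gate g S U) (.arrow .Q S U)
  | mtch {Δ : Ctx} {M : Tm} {p : Pat} {A B : Ty} :
      XTy Δ M A → XPatTy Δ p A B → XTy Δ (.matchWith M p) B

/-- Pattern typing for PQ-X. -/
inductive XPatTy : Ctx → Pat → Ty → Ty → Prop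
  | punit {Δ : Ctx} {m : Mode} {N : Tm} {B : Ty} :
      XTy Δ N B → XPatTy Δ (.punit N) (.unitT m) B
  | ppair {Δ : Ctx} {m : Mode} {x y : String} {N : Tm} {A₁ A₂ B : Ty} :
      XTy ((x, A₁) :: (y, A₂) :: Δ) N B →
      XPatTy Δ (.ppair x y N) (.tensor m A₁ A₂) B
  | pdown {Δ : Ctx} {x : String} {N : Tm} {A B : Ty} :
      XTy ((x, A) :: Δ) N B →
      XPatTy Δ (.pdown x N) (.down A) B
end

/-- `⌊Ψ⌋`: the underlying neutral variable context of a typed one. -/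
def names (Ψ : Ctx) : List String := Ψ.map Prod.fst

mutual
/-- Canonical forms under a neutral variable context. -/
inductive Can : List String → Tm → Prop
  | triv {Pi : List String} {m : Mode} : Can Pi (.triv m)
  | pair {Pi : List String} {m : Mode} {M N : Tm} :
      Norm Pi M → Norm Pi N → Can Pi (.pair m M N)
  | lamU {Pi : List String} {x : String} {M : Tm} : Can Pi (.lam .U x M)
  | lamL {Pi : List String} {x : String} {M : Tm} : Can Pi (.lam .L x M)
  | lamQ {Pi : List String} {x : String} {M : Tm} :
      Norm (x :: Pi) M → Can Pi (.lam .Q x M)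
  | susp {Pi : List String} {M : Tm} : Can Pi (.susp M)
  | down {Pi : List String} {M : Tm} : Norm Pi M → Can Pi (.down M)

/-- Neutral forms: neutral variables and (iterated) gate applications. -/
inductive Neu : List String → Tm → Prop
  | var {Pi : List String} {x : String} : x ∈ Pi → Neu Pi (.var x)
  | gate {Pi : List String} {g : String} {S U : Ty} : Neu Pi (.gate g S U)
  | appCan {Pi : List String} {m : Mode} {g : String} {S U : Ty} {K : Tm} :
      Can Pi K → Neu Pi (.app m (.gate g S U) K)
  | appNeu {Pi : List String} {m : Mode} {g : String} {S U : Ty} {R : Tm} :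
      Neu Pi R → Neu Pi (.app m (.gate g S U) R)

/-- Normal forms: canonical, neutral, or a match on a neutral
discriminee with a normal body. -/
inductive Norm : List String → Tm → Prop
  | can {Pi : List String} {K : Tm} : Can Pi K → Norm Pi K
  | neu {Pi : List String} {R : Tm} : Neu Pi R → Norm Pi R
  | mtch {Pi : List String} {R : Tm} {p : Pat} :
      Neu Pi R → Norm (p.vars ++ Pi) p.body → Norm Pi (.matchWith R p)
end

/-- Elimination of a canonical form by a pattern. -/
inductive ECan : Tm → Pat → Tm → Prop
  | triv {m : Mode} {N : Tm} : ECan (.triv m) (.punit N) N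
  | pair {m : Mode} {V W : Tm} {x y : String} {N : Tm} :
      ECan (.pair m V W) (.ppair x y N) (subst1 y W (subst1 x V N))
  | down {V : Tm} {x : String} {N : Tm} :
      ECan (.down V) (.pdown x N) (subst1 x V N)

/-- The call-by-value single-step reduction relation, parameterized by
the context of free neutral circuit variables.  It reduces under circuit
lambda binders and under matches on neutral discriminees, and performs
commuting conversions of elimination forms past neutral matches. -/
inductive Step : List String → Tm → Tm → Prop
  | app1 {Pi : List String} {m : Mode} {M M' N : Tm} :
      Step Pi M M' → Step Pi (.app m M N) (.app m M' N)
  | app2 {Pi : List String} {m : Mode} {M N N' : Tm} :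
      Norm Pi M → Step Pi N N' → Step Pi (.app m M N) (.app m M N')
  | beta {Pi : List String} {m : Mode} {x : String} {M V : Tm} :
      Norm Pi V → Step Pi (.app m (.lam m x M) V) (subst1 x V M)
  | appCC {Pi : List String} {m : Mode} {R W : Tm} {p : Pat} :
      Neu Pi R → Norm Pi (.matchWith R p) → Norm Pi W →
      Step Pi (.app m (.matchWith R p) W)
        (.matchWith R (p.mapBody (fun b => .app m b W)))
  | lamQ {Pi : List String} {x : String} {M M' : Tm} :
      Step (x :: Pi) M M' → Step Pi (.lam .Q x M) (.lam .Q x M')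
  | pair1 {Pi : List String} {m : Mode} {M M' N : Tm} :
      Step Pi M M' → Step Pi (.pair m M N) (.pair m M' N)
  | pair2 {Pi : List String} {m : Mode} {M N N' : Tm} :
      Norm Pi M → Step Pi N N' → Step Pi (.pair m M N) (.pair m M N')
  | forceSusp {Pi : List String} {M : Tm} :
      Step Pi (.force (.susp M)) M
  | force1 {Pi : List String} {M M' : Tm} :
      Step Pi M M' → Step Pi (.force M) (.force M')
  | forceCC {Pi : List String} {R : Tm} {p : Pat} :
      Neu Pi R → Norm Pi (.matchWith R p) →
      Step Pi (.force (.matchWith R p))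
        (.matchWith R (p.mapBody (fun b => .force b)))
  | down1 {Pi : List String} {M M' : Tm} :
      Step Pi M M' → Step Pi (.down M) (.down M')
  | mtch1 {Pi : List String} {M M' : Tm} {p : Pat} :
      Step Pi M M' → Step Pi (.matchWith M p) (.matchWith M' p)
  | mtchK {Pi : List String} {K P : Tm} {p : Pat} :
      Can Pi K → ECan K p P → Step Pi (.matchWith K p) P
  | mtchR {Pi : List String} {R B' : Tm} {p : Pat} :
      Neu Pi R → Step (p.vars ++ Pi) p.body B' →
      Step Pi (.matchWith R p) (.matchWith R (p.withBody B'))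
  | mtchCC {Pi : List String} {R : Tm} {p q : Pat} :
      Neu Pi R → Norm Pi (.matchWith R p) →
      Step Pi (.matchWith (.matchWith R p) q)
        (.matchWith R (p.mapBody (fun b => .matchWith b q)))

/-- Multi-step reduction. -/
def Steps (Pi : List String) : Tm → Tm → Prop :=
  Relation.ReflTransGen (Step Pi)

/-- `P` halts: it reduces to a normal form. -/
def Halts (Pi : List String) (P : Tm) : Prop :=
  ∃ V, Steps Pi P V ∧ Norm Pi V

/-- `σ` is a neutral substitution from `Ψ` to `Φ`: it maps each neutral
variable of `Φ` to a neutral, well-typed term over `Ψ`. -/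
def NSub (σ : String → Tm) (Ψ Φ : Ctx) : Prop :=
  ∀ q ∈ Φ, Neu (names Ψ) (σ q.1) ∧ XTy Ψ (σ q.1) q.2

/-- Closure of a base predicate under neutral terms, one-step expansion,
and matches on neutral discriminees (the type-generic clauses of the
Kripke logical normalization predicate). -/
inductive Close (A : Ty) (base : Ctx → Tm → Prop) : Ctx → Tm → Prop
  | base {Ψ : Ctx} {P : Tm} : base Ψ P → Close A base Ψ P
  | neu {Ψ : Ctx} {R : Tm} :
      Neu (names Ψ) R → XTy Ψ R A → Close A base Ψ R
  | steps {Ψ : Ctx} {P P' : Tm} :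
      Step (names Ψ) P P' → Close A base Ψ P' → Close A base Ψ P
  | mtch {Ψ : Ctx} {R : Tm} {p : Pat} {S : Ty} :
      Neu (names Ψ) R → XTy Ψ R S →
      Close A base (patCtx p S ++ Ψ) p.body →
      Close A base Ψ (.matchWith R p)

/-- The type-directed clauses of the logical predicate: introduction
forms at positive types, elimination forms at negative types. -/
def LRbase : Ty → Ctx → Tm → Prop
  | .unitT m, _, P => P = .triv m
  | .qubit, _, _ => False
  | .tensor m A B, Ψ, P => ∃ M N, P = .pair m M N ∧
      Close A (LRbase A) Ψ M ∧ Close B (LRbase B) Ψ N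
  | .arrow m A B, Ψ, P => Halts (names Ψ) P ∧
      ∀ (Φ : Ctx) (σ : String → Tm), NSub σ Φ Ψ →
        ∀ Q, Close A (LRbase A) Φ Q →
          Close B (LRbase B) Φ (.app m (P.subst σ) Q)
  | .up _ _ A, Ψ, P => Close A (LRbase A) Ψ (.force P)
  | .down A, Ψ, P => ∃ V, P = .down V ∧ Close A (LRbase A) Ψ V

/-- The Kripke logical normalization predicate `Ψ ⊩ P ∈ ⟦A⟧`. -/
def LR (Ψ : Ctx) (P : Tm) (A : Ty) : Prop := Close A (LRbase A) Ψ P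

/-- Reducible substitutions: each variable is mapped to a functionally
closed normal form satisfying the logical predicate at its type. -/
def RSub (Ψ : Ctx) (σ : String → Tm) (Δ : Ctx) : Prop :=
  ∀ q ∈ Δ, Norm (names Ψ) (σ q.1) ∧ LR Ψ (σ q.1) q.2

/-! Each clause of the predicate only admits terms that visibly halt. Neutral terms are normal,
and halting is preserved by head expansion and by matching a neutral term (reduction goes under
the match body). The arrow clause demands halting outright, and the pair and `down` clauses reduce
to their components by induction on the type. For `↑A` the predicate only says that `force P`
halts; this suffices because `force _` is never normal, and a reduction of `force P` can only leave
the `force` through `force (susp M)` or a commuting conversion, both of which need `P` normal. -/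

theorem Pat.vars_withBody (p : Pat) (B : Tm) : (p.withBody B).vars = p.vars := by
  cases p <;> rfl

theorem Pat.body_withBody (p : Pat) (B : Tm) : (p.withBody B).body = B := by
  cases p <;> rfl

theorem Pat.withBody_withBody (p : Pat) (B B' : Tm) :
    (p.withBody B).withBody B' = p.withBody B' := by
  cases p <;> rfl

theorem Pat.withBody_body (p : Pat) : p.withBody p.body = p := by
  cases p <;> rfl

/-- Only an inclusion: on a type of the wrong shape `patCtx` binds fewer variables than the
pattern does. -/
theorem names_patCtx_append_subset (p : Pat) (S : Ty) (Ψ : Ctx) :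
    names (patCtx p S ++ Ψ) ⊆ p.vars ++ names Ψ := by
  cases p <;> cases S <;> simp [names, patCtx, Pat.vars]

theorem append_subset_append_left {α : Type*} (l : List α) {l₁ l₂ : List α}
    (h : l₁ ⊆ l₂) :
    l ++ l₁ ⊆ l ++ l₂ :=
  List.append_subset.2
    ⟨List.subset_append_left _ _, List.Subset.trans h (List.subset_append_right _ _)⟩

section Weakening

mutual
theorem Can.mono {Pi Pi' : List String} {M : Tm} (hs : Pi ⊆ Pi') : Can Pi M → Can Pi' M
  | .triv => .triv
  | .pair hM hN => .pair (Norm.mono hs hM) (Norm.mono hs hN)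
  | .lamU => .lamU
  | .lamL => .lamL
  | .lamQ h => .lamQ (Norm.mono (List.cons_subset_cons _ hs) h)
  | .susp => .susp
  | .down h => .down (Norm.mono hs h)

theorem Neu.mono {Pi Pi' : List String} {M : Tm} (hs : Pi ⊆ Pi') : Neu Pi M → Neu Pi' M
  | .var hx => .var (hs hx)
  | .gate => .gate
  | .appCan h => .appCan (Can.mono hs h)
  | .appNeu h => .appNeu (Neu.mono hs h)

theorem Norm.mono {Pi Pi' : List String} {M : Tm} (hs : Pi ⊆ Pi') : Norm Pi M → Norm Pi' M
  | .can h => .can (Can.mono hs h)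
  | .neu h => .neu (Neu.mono hs h)
  | .mtch hR hB => .mtch (Neu.mono hs hR) (Norm.mono (append_subset_append_left _ hs) hB)
end

variable {Pi Pi' : List String}

theorem Step.mono {M M' : Tm} (hs : Pi ⊆ Pi') (h : Step Pi M M') : Step Pi' M M' := by
  induction h generalizing Pi' with
  | app1 _ ih => exact .app1 (ih hs)
  | app2 hN _ ih => exact .app2 (hN.mono hs) (ih hs)
  | beta hV => exact .beta (hV.mono hs)
  | appCC hR hM hW => exact .appCC (hR.mono hs) (hM.mono hs) (hW.mono hs)
  | lamQ _ ih => exact .lamQ (ih (List.cons_subset_cons _ hs))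
  | pair1 _ ih => exact .pair1 (ih hs)
  | pair2 hN _ ih => exact .pair2 (hN.mono hs) (ih hs)
  | forceSusp => exact .forceSusp
  | force1 _ ih => exact .force1 (ih hs)
  | forceCC hR hM => exact .forceCC (hR.mono hs) (hM.mono hs)
  | down1 _ ih => exact .down1 (ih hs)
  | mtch1 _ ih => exact .mtch1 (ih hs)
  | mtchK hK hE => exact .mtchK (hK.mono hs) hE
  | mtchR hR _ ih => exact .mtchR (hR.mono hs) (ih (append_subset_append_left _ hs))
  | mtchCC hR hM => exact .mtchCC (hR.mono hs) (hM.mono hs)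

theorem Steps.mono {M M' : Tm} (hs : Pi ⊆ Pi') (h : Steps Pi M M') : Steps Pi' M M' :=
  Relation.ReflTransGen.mono (fun _ _ => Step.mono hs) _ _ h

theorem Halts.mono {M : Tm} (hs : Pi ⊆ Pi') : Halts Pi M → Halts Pi' M
  | ⟨V, hMV, hV⟩ => ⟨V, hMV.mono hs, hV.mono hs⟩

end Weakening

theorem Steps.matchWith_withBody {Pi : List String} {R : Tm} (hR : Neu Pi R) (p : Pat)
    {B B' : Tm} (h : Steps (p.vars ++ Pi) B B') :
    Steps Pi (.matchWith R (p.withBody B)) (.matchWith R (p.withBody B')) :=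
  Relation.ReflTransGen.lift (fun b => Tm.matchWith R (p.withBody b)) (fun b _ hbb' => by
    simpa only [Pat.withBody_withBody] using
      Step.mtchR (p := p.withBody b) hR (by rwa [Pat.body_withBody, Pat.vars_withBody])) _ _ h

theorem not_norm_force {Pi : List String} {M : Tm} : ¬ Norm Pi (.force M) := by
  rintro (⟨⟨⟩⟩ | ⟨⟨⟩⟩)

namespace Halts

variable {Pi : List String}

theorem of_normal {V : Tm} (hV : Norm Pi V) : Halts Pi V :=
  ⟨V, .refl, hV⟩

theorem head {M M' : Tm} (hM : Step Pi M M') : Halts Pi M' → Halts Pi M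
  | ⟨V, hM'V, hV⟩ => ⟨V, .head hM hM'V, hV⟩

theorem pair {m : Mode} {M N : Tm} : Halts Pi M → Halts Pi N → Halts Pi (.pair m M N)
  | ⟨M', hMM', hM'⟩, ⟨N', hNN', hN'⟩ =>
    have reduceLeft : Steps Pi (.pair m M N) (.pair m M' N) :=
      Relation.ReflTransGen.lift (Tm.pair m · N) (fun _ _ => Step.pair1) _ _ hMM'
    have reduceRight : Steps Pi (.pair m M' N) (.pair m M' N') :=
      Relation.ReflTransGen.lift (Tm.pair m M' ·) (fun _ _ => Step.pair2 hM') _ _ hNN'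
    ⟨.pair m M' N', reduceLeft.trans reduceRight, .can (.pair hM' hN')⟩

theorem down {M : Tm} : Halts Pi M → Halts Pi (.down M)
  | ⟨V, hMV, hV⟩ =>
    ⟨.down V, Relation.ReflTransGen.lift Tm.down (fun _ _ => Step.down1) _ _ hMV,
      .can (.down hV)⟩

theorem matchWith {R : Tm} {p : Pat} (hR : Neu Pi R) :
    Halts (p.vars ++ Pi) p.body → Halts Pi (.matchWith R p)
  | ⟨B, hpB, hB⟩ => by
    refine ⟨.matchWith R (p.withBody B), ?_, .mtch hR ?_⟩
    · simpa only [Pat.withBody_body] using Steps.matchWith_withBody hR p hpB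
    · rwa [Pat.vars_withBody, Pat.body_withBody]

theorem of_force {M : Tm} : Halts Pi (.force M) → Halts Pi M := by
  rintro ⟨V, hMV, hV⟩
  generalize hF : Tm.force M = F at hMV
  induction hMV using Relation.ReflTransGen.head_induction_on generalizing M with
  | refl => subst hF; exact absurd hV not_norm_force
  | head hstep _ ih =>
    subst hF
    cases hstep with
    | forceSusp => exact of_normal (.can .susp)
    | force1 hMM' => exact head hMM' (ih rfl)
    | forceCC _ hM => exact of_normal hM

end Halts

theorem Close.halts {A : Ty} {base : Ctx → Tm → Prop}
    (hbase : ∀ Ψ P, base Ψ P → Halts (names Ψ) P) {Ψ : Ctx} {P : Tm}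
    (h : Close A base Ψ P) : Halts (names Ψ) P := by
  induction h with
  | base hP => exact hbase _ _ hP
  | neu hR _ => exact .of_normal (.neu hR)
  | steps hstep _ ih => exact ih.head hstep
  | @mtch Ψ R p S hR _ _ ih =>
    exact .matchWith hR (ih.mono (names_patCtx_append_subset p S Ψ))

theorem LRbase.halts (A : Ty) {Ψ : Ctx} {P : Tm} (h : LRbase A Ψ P) : Halts (names Ψ) P := by
  induction A generalizing Ψ P with
  | unitT m =>
    obtain rfl : P = .triv m := h
    exact .of_normal (.can .triv)
  | qubit => exact h.elim
  | tensor m A B ihA ihB =>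
    obtain ⟨M, N, rfl, hM, hN⟩ := h
    exact .pair (hM.halts fun _ _ => ihA) (hN.halts fun _ _ => ihB)
  | arrow m A B _ _ => exact h.1
  | up lo hi A ihA => exact .of_force (Close.halts (fun _ _ => ihA) h)
  | down A ihA =>
    obtain ⟨V, rfl, hV⟩ := h
    exact .down (hV.halts fun _ _ => ihA)

/-- adequacy of the logical normalization predicate. -/
theorem adequacy {Ψ : Ctx} {P : Tm} {A : Ty}
    (h : LR Ψ P A) : Halts (names Ψ) P :=
  Close.halts (fun _ _ => LRbase.halts A) h

end PQA
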